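/- Let Z ∈ ℂ^{n1×n2×n3} admit a skinny transformed tensor SVD Z = U ⋄ S ⋄ Vᴴ, let T be the subspace determined by U and V, and let Ω ⊆ [n1]×[n2]×[n3]. Suppose (i) there exists Y ∈ ℂ^{n1×n2×n3} with P_Ω(Y) = Y, ‖P_T(Y) − U ⋄ Vᴴ‖_F ≤ 1/(4 n_(1) n_3), and ‖P_{T⊥}(Y)‖ ≤ 1/2 (tensor spectral norm), and (ii) every nonzero W ∈ ℂ^{n1×n2×n3} with P_Ω(W) = 0 satisfies (1/2)‖P_{T⊥}(W)‖_TTNN > (1/(4 n_(1) n_3))‖P_T(W)‖_F. Then Z is the unique minimizer of ‖X‖_TTNN over all X ∈ ℂ^{n1×n2×n3} with P_Ω(X) = P_Ω(Z). -/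

import Mathlib

open scoped BigOperators ComplexConjugate
open MeasureTheory Matrix

noncomputable section

/-- A third-order complex tensor. -/
abbrev Tensor (n1 n2 n3 : ℕ) : Type := Fin n1 → Fin n2 → Fin n3 → ℂ

namespace Tensor

variable {n1 n2 n3 n4 r : ℕ}

/-- The `t`-th frontal slice of the transformed tensor `Φ[A]`. -/
def slice (Φ : Matrix (Fin n3) (Fin n3) ℂ) (A : Tensor n1 n2 n3) (t : Fin n3) :
    Matrix (Fin n1) (Fin n2) ℂ :=
  Matrix.of fun i j => ∑ k, Φ t k * A i j k

/-- Reconstruct a tensor from its transformed frontal slices (inverse transform `Φᴴ[·]`). -/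
def unslice (Φ : Matrix (Fin n3) (Fin n3) ℂ)
    (M : Fin n3 → Matrix (Fin n1) (Fin n2) ℂ) : Tensor n1 n2 n3 :=
  fun i j k => ∑ t, (starRingEnd ℂ) (Φ t k) * M t i j

/-- The Φ-product `A ⋄ B`. -/
def tprod (Φ : Matrix (Fin n3) (Fin n3) ℂ) (A : Tensor n1 n2 n3) (B : Tensor n2 n4 n3) :
    Tensor n1 n4 n3 :=
  unslice Φ fun t => slice Φ A t * slice Φ B t

/-- The conjugate transpose `Aᴴ` with respect to `Φ`. -/
def tconj (Φ : Matrix (Fin n3) (Fin n3) ℂ) (A : Tensor n1 n2 n3) : Tensor n2 n1 n3 :=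
  unslice Φ fun t => (slice Φ A t)ᴴ

/-- Frobenius norm of a tensor. -/
def frob (A : Tensor n1 n2 n3) : ℝ :=
  Real.sqrt (∑ i, ∑ j, ∑ k, Complex.normSq (A i j k))

/-- Entrywise inner product `⟨A, B⟩ = Σ conj(A) B`. -/
def tinner (A B : Tensor n1 n2 n3) : ℂ :=
  ∑ i, ∑ j, ∑ k, (starRingEnd ℂ) (A i j k) * B i j k

/-- `‖A‖_∞`, the max modulus of the entries. -/
def inftyNorm (A : Tensor n1 n2 n3) : ℝ :=
  ⨆ i, ⨆ j, ⨆ k, ‖A i j k‖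

/-- `‖A‖_{∞,2}`. -/
def infty2Norm (A : Tensor n1 n2 n3) : ℝ :=
  max (⨆ i : Fin n1, Real.sqrt (∑ b, ∑ k, Complex.normSq (A i b k)))
      (⨆ j : Fin n2, Real.sqrt (∑ a, ∑ k, Complex.normSq (A a j k)))

/-- The weighted norm `‖A‖_{∞,w}` for a weight vector `w`. -/
def inftyWNorm (w : Fin n3 → ℝ) (A : Tensor n1 n2 n3) : ℝ :=
  max (⨆ i : Fin n1, Real.sqrt (∑ b, ∑ k, (w k) ^ 2 * Complex.normSq (A i b k)))
      (⨆ j : Fin n2, Real.sqrt (∑ a, ∑ k, (w k) ^ 2 * Complex.normSq (A a j k)))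

/-- Spectral norm of a complex matrix (ℓ²→ℓ² operator norm). -/
def specNormM {m n : ℕ} (M : Matrix (Fin m) (Fin n) ℂ) : ℝ :=
  ‖LinearMap.toContinuousLinearMap (Matrix.toEuclideanLin M)‖

/-- Nuclear norm of a complex matrix: the sum of its singular values. -/
def nuclearNormM {m n : ℕ} (M : Matrix (Fin m) (Fin n) ℂ) : ℝ :=
  ∑ i, Real.sqrt ((Matrix.isHermitian_conjTranspose_mul_self M).eigenvalues i)

/-- Tensor spectral norm: max of spectral norms of transformed frontal slices. -/
def specNorm (Φ : Matrix (Fin n3) (Fin n3) ℂ) (A : Tensor n1 n2 n3) : ℝ :=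
  ⨆ t, specNormM (slice Φ A t)

/-- Transformed tensor nuclear norm. -/
def ttnn (Φ : Matrix (Fin n3) (Fin n3) ℂ) (A : Tensor n1 n2 n3) : ℝ :=
  ∑ t, nuclearNormM (slice Φ A t)

/-- The sampling projection `P_Ω`. -/
def projOmega (Ω : Set (Fin n1 × Fin n2 × Fin n3)) (A : Tensor n1 n2 n3) :
    Tensor n1 n2 n3 :=
  fun i j k => Ω.indicator (fun p => A p.1 p.2.1 p.2.2) (i, j, k)

/-- The column-basis tensor `e_ik ∈ ℂ^{n×1×n3}`. -/
def colBasis {n n3 : ℕ} (i : Fin n) (k : Fin n3) : Tensor n 1 n3 :=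
  fun a _ c => if a = i ∧ c = k then 1 else 0

/-- The unit tensor `E_ijk`. -/
def unitTensor (i : Fin n1) (j : Fin n2) (k : Fin n3) : Tensor n1 n2 n3 :=
  fun a b c => if a = i ∧ b = j ∧ c = k then 1 else 0

/-- The orthogonal projection `P_T` onto the subspace `T` determined by `U, V`. -/
def projT (Φ : Matrix (Fin n3) (Fin n3) ℂ) (U : Tensor n1 r n3) (V : Tensor n2 r n3)
    (X : Tensor n1 n2 n3) : Tensor n1 n2 n3 :=
  tprod Φ (tprod Φ U (tconj Φ U)) X + tprod Φ X (tprod Φ V (tconj Φ V))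
    - tprod Φ (tprod Φ (tprod Φ U (tconj Φ U)) X) (tprod Φ V (tconj Φ V))

/-- `P_{T⊥}(X) = X - P_T(X)`. -/
def projTperp (Φ : Matrix (Fin n3) (Fin n3) ℂ) (U : Tensor n1 r n3) (V : Tensor n2 r n3)
    (X : Tensor n1 n2 n3) : Tensor n1 n2 n3 :=
  X - projT Φ U V X

/-- Operator norm of a map on tensors, w.r.t. the Frobenius norm. -/
def opNorm (L : Tensor n1 n2 n3 → Tensor n1 n2 n3) : ℝ :=
  sSup ((fun X => frob (L X)) '' {X | frob X ≤ 1})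

/-- A skinny transformed tensor SVD `Z = U ⋄ S ⋄ Vᴴ`. -/
structure SkinnySVD (Φ : Matrix (Fin n3) (Fin n3) ℂ) (Z : Tensor n1 n2 n3) (r : ℕ)
    (U : Tensor n1 r n3) (S : Tensor r r n3) (V : Tensor n2 r n3) : Prop where
  factor : Z = tprod Φ (tprod Φ U S) (tconj Φ V)
  U_orth : ∀ t, (slice Φ U t)ᴴ * slice Φ U t = 1
  V_orth : ∀ t, (slice Φ V t)ᴴ * slice Φ V t = 1
  S_offdiag : ∀ t i j, i ≠ j → slice Φ S t i j = 0
  S_diag_real_nonneg : ∀ t i, (slice Φ S t i i).im = 0 ∧ 0 ≤ (slice Φ S t i i).re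

/-- The tensor incoherence conditions with parameter μ. -/
def Incoherent (Φ : Matrix (Fin n3) (Fin n3) ℂ) (Z : Tensor n1 n2 n3)
    (U : Tensor n1 r n3) (V : Tensor n2 r n3) (μ : ℝ) : Prop :=
  (∀ (i : Fin n1) (k : Fin n3),
      (frob (tprod Φ (tconj Φ U) (colBasis i k))) ^ 2
        ≤ μ * (∑ t, ((slice Φ Z t).rank : ℝ)) / (n1 * n3)) ∧
  (∀ (j : Fin n2) (k : Fin n3),
      (frob (tprod Φ (tconj Φ V) (colBasis j k))) ^ 2
        ≤ μ * (∑ t, ((slice Φ Z t).rank : ℝ)) / (n2 * n3))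

/-- Bernoulli measure on `Bool` with success probability ρ. -/
def berMeasure (ρ : ℝ) : Measure Bool :=
  ρ.toNNReal • Measure.dirac true + (1 - ρ).toNNReal • Measure.dirac false

instance (ρ : ℝ) : IsFiniteMeasure (berMeasure ρ) := by
  unfold berMeasure; infer_instance

/-- The i.i.d. Bernoulli sampling model `Ω ~ Ber(ρ)`. -/
def berPi (n1 n2 n3 : ℕ) (ρ : ℝ) : Measure ((Fin n1 × Fin n2 × Fin n3) → Bool) :=
  Measure.pi fun _ => berMeasure ρ

/-- The random set `Ω` determined by a Bernoulli sample. -/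
def omegaSet {n1 n2 n3 : ℕ} (ω : (Fin n1 × Fin n2 × Fin n3) → Bool) :
    Set (Fin n1 × Fin n2 × Fin n3) := {p | ω p = true}

end Tensor

open Tensor

/-!
Dual certificate argument. Put `W = X - Z`, which vanishes on `Ω`, and on every transformed
slice let `Q` be the polar factor of `P_{T⊥}(W)`. Then `G = U ⋄ Vᴴ + Q` has spectral norm at
most one, so the duality between spectral and nuclear norms gives `‖X‖_TTNN ≥ Re⟨G, X⟩`,
while `Re⟨G, Z⟩ = Σ tr S ≥ ‖Z‖_TTNN`. It remains to see `Re⟨G, W⟩ > 0`. As `⟨Y, W⟩ = 0`,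
`⟨G, W⟩ = ⟨G - Y, W⟩` splits along `T ⊕ T⊥` into `⟨U ⋄ Vᴴ - P_T(Y), P_T(W)⟩`, which is at
least `-c ‖P_T(W)‖_F` for `c = 1/(4 n_(1) n_3)` by Cauchy–Schwarz, and
`⟨Q - P_{T⊥}(Y), P_{T⊥}(W)⟩`, which is at least `½ ‖P_{T⊥}(W)‖_TTNN`; hypothesis (ii) makes
the sum positive.
-/

open scoped Matrix.Norms.L2Operator ComplexOrder

section L2OpNorm

variable {m n p : Type*} [Fintype m] [Fintype n] [Fintype p]

lemma Matrix.norm_apply_le_l2_opNorm [DecidableEq n] (C : Matrix m n ℂ) (i : m) (j : n) :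
    ‖C i j‖ ≤ ‖C‖ := by
  have h := C.l2_opNorm_mulVec (EuclideanSpace.single j 1)
  rw [PiLp.norm_single, norm_one, mul_one] at h
  refine le_trans (le_of_eq ?_) ((PiLp.norm_apply_le _ i).trans h)
  simp [EuclideanSpace.single]

lemma Matrix.l2_opNorm_le_one_of_conjTranspose_mul_self_idem [DecidableEq n] {A : Matrix m n ℂ}
    (h : (Aᴴ * A) * (Aᴴ * A) = Aᴴ * A) : ‖A‖ ≤ 1 := by
  have hE : ‖Aᴴ * A‖ * ‖Aᴴ * A‖ = ‖Aᴴ * A‖ := by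
    rw [← l2_opNorm_conjTranspose_mul_self, conjTranspose_mul, conjTranspose_conjTranspose, h]
  rw [l2_opNorm_conjTranspose_mul_self] at hE
  have hsq : ‖A‖ * ‖A‖ ≤ 1 := by nlinarith [mul_self_nonneg ‖A‖]
  nlinarith [norm_nonneg A]

lemma Matrix.l2_opNorm_le_one_of_conjTranspose_mul_self_eq_one [DecidableEq n] {A : Matrix m n ℂ}
    (hA : Aᴴ * A = 1) : ‖A‖ ≤ 1 :=
  l2_opNorm_le_one_of_conjTranspose_mul_self_idem <| by rw [hA, Matrix.mul_one]

lemma Matrix.re_trace_mul_diagonal_le [DecidableEq n] (C : Matrix n n ℂ) {s : n → ℝ}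
    (hs : ∀ i, 0 ≤ s i) : (trace (C * diagonal fun i => (s i : ℂ))).re ≤ ‖C‖ * ∑ i, s i := by
  simp only [trace, diag, mul_diagonal, Complex.re_sum, Finset.mul_sum]
  refine Finset.sum_le_sum fun i _ => ?_
  rw [Complex.re_mul_ofReal]
  exact mul_le_mul_of_nonneg_right
    ((Complex.re_le_norm _).trans (norm_apply_le_l2_opNorm C i i)) (hs i)

lemma Matrix.re_trace_conjTranspose_mul_le [DecidableEq m] [DecidableEq n] [DecidableEq p]
    (G : Matrix m n ℂ) {A : Matrix m p ℂ} {B : Matrix n p ℂ} (hA : ‖A‖ ≤ 1) (hB : ‖B‖ ≤ 1)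
    {s : p → ℝ} (hs : ∀ i, 0 ≤ s i) :
    (trace (Gᴴ * (A * diagonal (fun i => (s i : ℂ)) * Bᴴ))).re ≤ ‖G‖ * ∑ i, s i := by
  have hC : ‖Bᴴ * Gᴴ * A‖ ≤ ‖G‖ :=
    calc ‖Bᴴ * Gᴴ * A‖ ≤ ‖Bᴴ‖ * ‖Gᴴ‖ * ‖A‖ :=
          (l2_opNorm_mul _ _).trans (mul_le_mul_of_nonneg_right (l2_opNorm_mul _ _) (norm_nonneg _))
      _ ≤ 1 * ‖G‖ * 1 := by
          rw [l2_opNorm_conjTranspose, l2_opNorm_conjTranspose]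
          gcongr
      _ = ‖G‖ := by ring
  have htr : trace (Gᴴ * (A * diagonal (fun i => (s i : ℂ)) * Bᴴ)) =
      trace (Bᴴ * Gᴴ * A * diagonal fun i => (s i : ℂ)) := by
    simp only [← Matrix.mul_assoc]
    rw [trace_mul_comm]
    simp only [Matrix.mul_assoc]
  rw [htr]
  exact (re_trace_mul_diagonal_le _ hs).trans
    (mul_le_mul_of_nonneg_right hC (Finset.sum_nonneg fun i _ => hs i))

end L2OpNorm

section PolarDecomposition

variable {m n r : ℕ} (M : Matrix (Fin m) (Fin n) ℂ)

def gramEigenbasis : Matrix (Fin n) (Fin n) ℂ :=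
  (isHermitian_conjTranspose_mul_self M).eigenvectorUnitary

def singularValues (i : Fin n) : ℝ :=
  √((isHermitian_conjTranspose_mul_self M).eigenvalues i)

/-- `funAbs M f` is `f(|M|)` for `|M| = (Mᴴ M)^{1/2}`. -/
def funAbs (f : ℝ → ℝ) : Matrix (Fin n) (Fin n) ℂ :=
  gramEigenbasis M * diagonal (fun i => (f (singularValues M i) : ℂ)) * (gramEigenbasis M)ᴴ

def supportProj : Matrix (Fin n) (Fin n) ℂ := funAbs M fun x => x * x⁻¹

/-- The partial isometry `M |M|⁺` of the polar decomposition `M = (M |M|⁺) |M|`; the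
pseudo-inverse `|M|⁺` is `funAbs M (·⁻¹)` because `(0 : ℝ)⁻¹ = 0`. -/
def polar : Matrix (Fin m) (Fin n) ℂ := M * funAbs M (·⁻¹)

lemma gramEigenbasis_conjTranspose_mul_self : (gramEigenbasis M)ᴴ * gramEigenbasis M = 1 := by
  have h := (mem_unitaryGroup_iff').mp (isHermitian_conjTranspose_mul_self M).eigenvectorUnitary.2
  rwa [star_eq_conjTranspose] at h

lemma nuclearNormM_eq_sum_singularValues : nuclearNormM M = ∑ i, singularValues M i := rfl

lemma singularValues_nonneg (i : Fin n) : 0 ≤ singularValues M i := Real.sqrt_nonneg _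

lemma nuclearNormM_nonneg : 0 ≤ nuclearNormM M :=
  Finset.sum_nonneg fun i _ => singularValues_nonneg M i

lemma funAbs_mul_funAbs {f g h : ℝ → ℝ} (hfg : ∀ x, f x * g x = h x) :
    funAbs M f * funAbs M g = funAbs M h := by
  simp only [funAbs, Matrix.mul_assoc]
  rw [← Matrix.mul_assoc (gramEigenbasis M)ᴴ, gramEigenbasis_conjTranspose_mul_self,
    Matrix.one_mul, ← Matrix.mul_assoc (diagonal _), diagonal_mul_diagonal]
  simp_rw [← Complex.ofReal_mul, hfg]

lemma conjTranspose_funAbs (f : ℝ → ℝ) : (funAbs M f)ᴴ = funAbs M f := by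
  simp only [funAbs, conjTranspose_mul, conjTranspose_conjTranspose, diagonal_conjTranspose,
    Matrix.mul_assoc]
  congr 3
  funext i
  exact Complex.conj_ofReal _

lemma conjTranspose_mul_self_eq_funAbs : Mᴴ * M = funAbs M (· ^ 2) := by
  have h := (isHermitian_conjTranspose_mul_self M).spectral_theorem
  rw [Unitary.conjStarAlgAut_apply, star_eq_conjTranspose] at h
  rw [h, funAbs]
  congr 3
  funext i
  simp [singularValues, Real.sq_sqrt (eigenvalues_conjTranspose_mul_self_nonneg M i)]

lemma trace_funAbs (f : ℝ → ℝ) : trace (funAbs M f) = ∑ i, (f (singularValues M i) : ℂ) := by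
  rw [funAbs, trace_mul_comm, ← Matrix.mul_assoc, gramEigenbasis_conjTranspose_mul_self,
    Matrix.one_mul, trace_diagonal]

lemma conjTranspose_supportProj : (supportProj M)ᴴ = supportProj M :=
  conjTranspose_funAbs M _

lemma supportProj_mul_self : supportProj M * supportProj M = supportProj M :=
  funAbs_mul_funAbs M fun x => by rcases eq_or_ne x 0 with rfl | hx <;> simp [*]

lemma mul_supportProj : M * supportProj M = M := by
  have hME : Mᴴ * M * supportProj M = Mᴴ * M := by
    rw [conjTranspose_mul_self_eq_funAbs, supportProj, funAbs_mul_funAbs M fun x => ?_]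
    rcases eq_or_ne x 0 with rfl | hx <;> field_simp
  have h0 : (M * (1 - supportProj M))ᴴ * (M * (1 - supportProj M)) = 0 := by
    rw [conjTranspose_mul, Matrix.mul_assoc, ← Matrix.mul_assoc Mᴴ, Matrix.mul_sub, hME,
      Matrix.mul_one, sub_self, Matrix.mul_zero]
  rw [conjTranspose_mul_self_eq_zero, Matrix.mul_sub, Matrix.mul_one, sub_eq_zero] at h0
  exact h0.symm

lemma conjTranspose_polar_mul_polar : (polar M)ᴴ * polar M = supportProj M := by
  rw [polar, conjTranspose_mul, conjTranspose_funAbs, Matrix.mul_assoc, ← Matrix.mul_assoc Mᴴ,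
    conjTranspose_mul_self_eq_funAbs, funAbs_mul_funAbs M (h := fun x => x) fun x => ?_,
    funAbs_mul_funAbs M fun x => ?_, supportProj]
  · ring
  · rcases eq_or_ne x 0 with rfl | hx <;> field_simp

lemma norm_polar_le_one : ‖polar M‖ ≤ 1 :=
  l2_opNorm_le_one_of_conjTranspose_mul_self_idem <| by
    rw [conjTranspose_polar_mul_polar, supportProj_mul_self]

lemma mul_polar_eq_zero {k : ℕ} {N : Matrix (Fin k) (Fin m) ℂ} (h : N * M = 0) :
    N * polar M = 0 := by
  rw [polar, ← Matrix.mul_assoc, h, Matrix.zero_mul]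

lemma polar_mul_eq_zero {k : ℕ} {N : Matrix (Fin n) (Fin k) ℂ} (h : M * N = 0) :
    polar M * N = 0 := by
  have hQE : polar M * supportProj M = polar M := by
    rw [polar, Matrix.mul_assoc, supportProj, funAbs_mul_funAbs M fun x => ?_]
    rcases eq_or_ne x 0 with rfl | hx <;> field_simp
  have hE : supportProj M = funAbs M (fun x => x⁻¹ * x⁻¹) * (Mᴴ * M) := by
    rw [conjTranspose_mul_self_eq_funAbs, supportProj, funAbs_mul_funAbs M fun x => ?_]
    rcases eq_or_ne x 0 with rfl | hx <;> field_simp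
  rw [← hQE, hE, Matrix.mul_assoc, Matrix.mul_assoc, Matrix.mul_assoc, h, Matrix.mul_zero,
    Matrix.mul_zero, Matrix.mul_zero]

lemma trace_conjTranspose_polar_mul : trace ((polar M)ᴴ * M) = nuclearNormM M := by
  rw [polar, conjTranspose_mul, conjTranspose_funAbs, Matrix.mul_assoc,
    conjTranspose_mul_self_eq_funAbs, funAbs_mul_funAbs M (h := fun x => x) fun x => ?_,
    trace_funAbs, nuclearNormM_eq_sum_singularValues, Complex.ofReal_sum]
  rcases eq_or_ne x 0 with rfl | hx <;> field_simp

lemma polar_mul_funAbs_id : polar M * funAbs M (fun x => x) = M := by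
  rw [polar, Matrix.mul_assoc, funAbs_mul_funAbs M (f := (·⁻¹)) (g := fun x => x)
    (h := fun x => x * x⁻¹) fun x => mul_comm _ _, ← supportProj, mul_supportProj]

lemma re_trace_le_norm_mul_nuclearNormM (G : Matrix (Fin m) (Fin n) ℂ) :
    (trace (Gᴴ * M)).re ≤ ‖G‖ * nuclearNormM M := by
  have hV := l2_opNorm_le_one_of_conjTranspose_mul_self_eq_one
    (gramEigenbasis_conjTranspose_mul_self M)
  have hM : M = polar M * gramEigenbasis M * diagonal (fun i => (singularValues M i : ℂ)) *
      (gramEigenbasis M)ᴴ := by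
    conv_lhs => rw [← polar_mul_funAbs_id M, funAbs]
    simp only [Matrix.mul_assoc]
  conv_lhs => rw [hM]
  refine re_trace_conjTranspose_mul_le G ?_ hV (singularValues_nonneg M)
  simpa using (l2_opNorm_mul _ _).trans (mul_le_one₀ (norm_polar_le_one M) (norm_nonneg _) hV)

variable {U : Matrix (Fin m) (Fin r) ℂ} {V : Matrix (Fin n) (Fin r) ℂ}

lemma nuclearNormM_mul_diagonal_mul_le (hU : Uᴴ * U = 1) (hV : Vᴴ * V = 1) {s : Fin r → ℝ}
    (hs : ∀ i, 0 ≤ s i) : nuclearNormM (U * diagonal (fun i => (s i : ℂ)) * Vᴴ) ≤ ∑ i, s i := by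
  have h := re_trace_conjTranspose_mul_le (polar (U * diagonal (fun i => (s i : ℂ)) * Vᴴ))
    (l2_opNorm_le_one_of_conjTranspose_mul_self_eq_one hU)
    (l2_opNorm_le_one_of_conjTranspose_mul_self_eq_one hV) hs
  rw [trace_conjTranspose_polar_mul, Complex.ofReal_re] at h
  exact h.trans (mul_le_of_le_one_left (Finset.sum_nonneg fun i _ => hs i) (norm_polar_le_one _))

lemma norm_add_polar_le_one (hU : Uᴴ * U = 1) (hV : Vᴴ * V = 1) (hUM : Uᴴ * M = 0)
    (hMV : M * V = 0) : ‖U * Vᴴ + polar M‖ ≤ 1 := by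
  have hUQ : Uᴴ * polar M = 0 := mul_polar_eq_zero M hUM
  have hQU : (polar M)ᴴ * U = 0 := by
    rw [← conjTranspose_conjTranspose U, ← conjTranspose_mul, hUQ, conjTranspose_zero]
  have hEV : supportProj M * V = 0 := by
    rw [← conjTranspose_polar_mul_polar, Matrix.mul_assoc, polar_mul_eq_zero M hMV,
      Matrix.mul_zero]
  have hVE : Vᴴ * supportProj M = 0 := by
    rw [← conjTranspose_supportProj, ← conjTranspose_mul, hEV, conjTranspose_zero]
  have hgram : (U * Vᴴ + polar M)ᴴ * (U * Vᴴ + polar M) = V * Vᴴ + supportProj M := by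
    simp only [conjTranspose_add, conjTranspose_mul, conjTranspose_conjTranspose, Matrix.add_mul,
      Matrix.mul_add, ← Matrix.mul_assoc]
    rw [Matrix.mul_assoc V Uᴴ U, hU, Matrix.mul_one, Matrix.mul_assoc V Uᴴ, hUQ, Matrix.mul_zero,
      hQU, Matrix.zero_mul, conjTranspose_polar_mul_polar, add_zero, zero_add]
  refine l2_opNorm_le_one_of_conjTranspose_mul_self_idem ?_
  rw [hgram]
  simp only [Matrix.add_mul, Matrix.mul_add, ← Matrix.mul_assoc]
  rw [Matrix.mul_assoc V Vᴴ V, hV, Matrix.mul_one, Matrix.mul_assoc V Vᴴ, hVE, hEV,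
    supportProj_mul_self]
  simp

end PolarDecomposition

section OrthogonalSplitting

variable {m n : Type*} [Fintype m] [Fintype n] {P : Matrix m m ℂ} {Q : Matrix n n ℂ}

lemma trace_conjTranspose_mul_eq_add (hP : Pᴴ = P) (hPP : P * P = P) (hQ : Qᴴ = Q)
    (hQQ : Q * Q = Q) (A B : Matrix m n ℂ) :
    trace (Aᴴ * B) = trace ((A - P * A * Q)ᴴ * (B - P * B * Q))
      + trace ((P * A * Q)ᴴ * (P * B * Q)) := by
  have hleft : trace ((P * A * Q)ᴴ * B) = trace (Aᴴ * (P * B * Q)) := by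
    simp only [conjTranspose_mul, hP, hQ, Matrix.mul_assoc]
    rw [trace_mul_comm]
    simp only [Matrix.mul_assoc]
  have hboth : trace ((P * A * Q)ᴴ * (P * B * Q)) = trace (Aᴴ * (P * B * Q)) := by
    simp only [conjTranspose_mul, hP, hQ, Matrix.mul_assoc]
    rw [trace_mul_comm]
    simp only [Matrix.mul_assoc, hQQ]
    rw [← Matrix.mul_assoc P P, hPP]
  rw [conjTranspose_sub, Matrix.sub_mul, Matrix.mul_sub, Matrix.mul_sub, trace_sub, trace_sub,
    trace_sub, hleft, hboth]
  ring

end OrthogonalSplitting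

section ColumnProjections

variable {m n r : ℕ} {U : Matrix (Fin m) (Fin r) ℂ}

lemma conjTranspose_mul_one_sub_mul_conjTranspose (hU : Uᴴ * U = 1) : Uᴴ * (1 - U * Uᴴ) = 0 := by
  rw [Matrix.mul_sub, Matrix.mul_one, ← Matrix.mul_assoc, hU, Matrix.one_mul, sub_self]

lemma one_sub_mul_conjTranspose_mul_self (hU : Uᴴ * U = 1) : (1 - U * Uᴴ) * U = 0 := by
  rw [Matrix.sub_mul, Matrix.one_mul, Matrix.mul_assoc, hU, Matrix.mul_one, sub_self]

lemma conjTranspose_one_sub_mul_conjTranspose : (1 - U * Uᴴ)ᴴ = 1 - U * Uᴴ := by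
  simp [conjTranspose_sub, conjTranspose_mul]

lemma one_sub_mul_conjTranspose_idem (hU : Uᴴ * U = 1) :
    (1 - U * Uᴴ) * (1 - U * Uᴴ) = 1 - U * Uᴴ := by
  rw [Matrix.sub_mul (1 : Matrix _ _ ℂ), Matrix.one_mul, Matrix.mul_assoc,
    conjTranspose_mul_one_sub_mul_conjTranspose hU, Matrix.mul_zero, sub_zero]

lemma one_sub_mul_conjTranspose_mul_of_conjTranspose_mul_eq_zero {Q : Matrix (Fin m) (Fin n) ℂ}
    (h : Uᴴ * Q = 0) : (1 - U * Uᴴ) * Q = Q := by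
  rw [Matrix.sub_mul, Matrix.one_mul, Matrix.mul_assoc, h, Matrix.mul_zero, sub_zero]

lemma mul_one_sub_mul_conjTranspose_of_mul_eq_zero {Q : Matrix (Fin n) (Fin m) ℂ}
    (h : Q * U = 0) : Q * (1 - U * Uᴴ) = Q := by
  rw [Matrix.mul_sub, Matrix.mul_one, ← Matrix.mul_assoc, h, Matrix.zero_mul, sub_zero]

lemma trace_conjTranspose_add_mul {V : Matrix (Fin n) (Fin r) ℂ} {Q : Matrix (Fin m) (Fin n) ℂ}
    (hU : Uᴴ * U = 1) (hV : Vᴴ * V = 1) (hUQ : Uᴴ * Q = 0) (D : Matrix (Fin r) (Fin r) ℂ) :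
    trace ((U * Vᴴ + Q)ᴴ * (U * D * Vᴴ)) = trace D := by
  have hQU : Qᴴ * U = 0 := by
    rw [← conjTranspose_conjTranspose U, ← conjTranspose_mul, hUQ, conjTranspose_zero]
  rw [conjTranspose_add, Matrix.add_mul, trace_add, conjTranspose_mul, conjTranspose_conjTranspose,
    ← Matrix.mul_assoc Qᴴ, ← Matrix.mul_assoc Qᴴ, hQU, Matrix.zero_mul, Matrix.zero_mul,
    trace_zero, add_zero, Matrix.mul_assoc, ← Matrix.mul_assoc Uᴴ, ← Matrix.mul_assoc Uᴴ, hU,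
    Matrix.one_mul, trace_mul_comm, Matrix.mul_assoc, hV, Matrix.mul_one]

end ColumnProjections

section Transform

variable {n1 n2 n3 n4 r : ℕ} {Φ : Matrix (Fin n3) (Fin n3) ℂ}

lemma slice_apply (A : Tensor n1 n2 n3) (t : Fin n3) (i : Fin n1) (j : Fin n2) :
    slice Φ A t i j = (Φ *ᵥ A i j) t := rfl

lemma unslice_apply (M : Fin n3 → Matrix (Fin n1) (Fin n2) ℂ) (i : Fin n1) (j : Fin n2) :
    unslice Φ M i j = Φᴴ *ᵥ fun t => M t i j := rfl

lemma slice_add (A B : Tensor n1 n2 n3) (t : Fin n3) :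
    slice Φ (A + B) t = slice Φ A t + slice Φ B t := by
  ext i j
  simp only [Matrix.add_apply, slice_apply, Pi.add_apply, mulVec_add]

lemma slice_sub (A B : Tensor n1 n2 n3) (t : Fin n3) :
    slice Φ (A - B) t = slice Φ A t - slice Φ B t := by
  ext i j
  simp only [Matrix.sub_apply, slice_apply, Pi.sub_apply, mulVec_sub]

lemma slice_zero (t : Fin n3) : slice Φ (0 : Tensor n1 n2 n3) t = 0 := by
  ext i j
  simp [slice_apply]

variable (hΦ : Φ ∈ unitaryGroup (Fin n3) ℂ)
include hΦ

lemma slice_unslice (M : Fin n3 → Matrix (Fin n1) (Fin n2) ℂ) (t : Fin n3) :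
    slice Φ (unslice Φ M) t = M t := by
  ext i j
  rw [slice_apply, unslice_apply, mulVec_mulVec, ← star_eq_conjTranspose,
    (mem_unitaryGroup_iff).mp hΦ, one_mulVec]

lemma unslice_slice (A : Tensor n1 n2 n3) : unslice Φ (slice Φ A) = A := by
  funext i j
  change Φᴴ *ᵥ (Φ *ᵥ A i j) = A i j
  rw [mulVec_mulVec, ← star_eq_conjTranspose, (mem_unitaryGroup_iff').mp hΦ, one_mulVec]

lemma ext_slice {A B : Tensor n1 n2 n3} (h : ∀ t, slice Φ A t = slice Φ B t) : A = B := by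
  rw [← unslice_slice hΦ A, ← unslice_slice hΦ B, funext h]

lemma slice_tprod (A : Tensor n1 n2 n3) (B : Tensor n2 n4 n3) (t : Fin n3) :
    slice Φ (tprod Φ A B) t = slice Φ A t * slice Φ B t :=
  slice_unslice hΦ _ t

lemma slice_tconj (A : Tensor n1 n2 n3) (t : Fin n3) :
    slice Φ (tconj Φ A) t = (slice Φ A t)ᴴ :=
  slice_unslice hΦ _ t

lemma tinner_eq_sum_trace (A B : Tensor n1 n2 n3) :
    tinner A B = ∑ t, trace ((slice Φ A t)ᴴ * slice Φ B t) := by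
  have htube (i : Fin n1) (j : Fin n2) :
      ∑ k, star (A i j k) * B i j k = ∑ t, star (slice Φ A t i j) * slice Φ B t i j := by
    change star (A i j) ⬝ᵥ B i j = star (Φ *ᵥ A i j) ⬝ᵥ (Φ *ᵥ B i j)
    rw [star_mulVec, ← dotProduct_mulVec, mulVec_mulVec, ← star_eq_conjTranspose,
      (mem_unitaryGroup_iff').mp hΦ, one_mulVec]
  simp only [trace, diag, mul_apply, conjTranspose_apply]
  unfold tinner
  simp_rw [← Complex.star_def, htube]
  symm
  rw [Finset.sum_congr rfl fun t _ => Finset.sum_comm, Finset.sum_comm]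
  exact Finset.sum_congr rfl fun i _ => Finset.sum_comm

end Transform

section TensorInner

variable {n1 n2 n3 : ℕ}

lemma tinner_sub_left (A B C : Tensor n1 n2 n3) :
    tinner (A - B) C = tinner A C - tinner B C := by
  simp only [tinner, Pi.sub_apply, map_sub, sub_mul, Finset.sum_sub_distrib]

lemma tinner_sub_right (A B C : Tensor n1 n2 n3) :
    tinner A (B - C) = tinner A B - tinner A C := by
  simp only [tinner, Pi.sub_apply, mul_sub, Finset.sum_sub_distrib]

def Tensor.flatten (A : Tensor n1 n2 n3) : EuclideanSpace ℂ (Fin n1 × Fin n2 × Fin n3) :=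
  WithLp.toLp 2 fun p => A p.1 p.2.1 p.2.2

lemma tinner_eq_inner (A B : Tensor n1 n2 n3) :
    tinner A B = inner ℂ (flatten A) (flatten B) := by
  rw [flatten, flatten, EuclideanSpace.inner_toLp_toLp, dotProduct_comm, dotProduct,
    Fintype.sum_prod_type]
  simp only [Fintype.sum_prod_type]
  rfl

lemma frob_eq_norm (A : Tensor n1 n2 n3) : frob A = ‖flatten A‖ := by
  rw [EuclideanSpace.norm_eq, frob, flatten, Fintype.sum_prod_type]
  simp only [Fintype.sum_prod_type, Complex.sq_norm]

lemma frob_nonneg (A : Tensor n1 n2 n3) : 0 ≤ frob A := Real.sqrt_nonneg _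

lemma frob_sub_comm (A B : Tensor n1 n2 n3) : frob (A - B) = frob (B - A) := by
  simp only [frob, Pi.sub_apply, ← Complex.normSq_neg (A _ _ _ - _), neg_sub]

lemma neg_frob_mul_frob_le_re_tinner (A B : Tensor n1 n2 n3) :
    -(frob A * frob B) ≤ (tinner A B).re := by
  rw [tinner_eq_inner, frob_eq_norm, frob_eq_norm, neg_le, ← Complex.neg_re, ← inner_neg_right,
    ← norm_neg (flatten B)]
  exact re_inner_le_norm (𝕜 := ℂ) _ _

lemma tinner_eq_zero_of_projOmega {Ω : Set (Fin n1 × Fin n2 × Fin n3)} {Y W : Tensor n1 n2 n3}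
    (hY : projOmega Ω Y = Y) (hW : projOmega Ω W = 0) : tinner Y W = 0 := by
  refine Finset.sum_eq_zero fun i _ => Finset.sum_eq_zero fun j _ =>
    Finset.sum_eq_zero fun k _ => ?_
  have hY' := congr_fun (congr_fun (congr_fun hY i) j) k
  have hW' := congr_fun (congr_fun (congr_fun hW i) j) k
  by_cases hp : (i, j, k) ∈ Ω
  · simp [projOmega, Set.indicator_of_mem hp] at hW'
    simp [hW']
  · simp [projOmega, Set.indicator_of_notMem hp] at hY'
    simp [← hY']

lemma projOmega_sub (Ω : Set (Fin n1 × Fin n2 × Fin n3)) (A B : Tensor n1 n2 n3) :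
    projOmega Ω (A - B) = projOmega Ω A - projOmega Ω B := by
  funext i j k
  simp only [projOmega, Pi.sub_apply, Set.indicator_sub]

end TensorInner

section TensorNorms

variable {n1 n2 n3 : ℕ} {Φ : Matrix (Fin n3) (Fin n3) ℂ}

lemma ttnn_nonneg (A : Tensor n1 n2 n3) : 0 ≤ ttnn Φ A :=
  Finset.sum_nonneg fun _ _ => nuclearNormM_nonneg _

lemma specNormM_slice_le_specNorm (A : Tensor n1 n2 n3) (t : Fin n3) :
    specNormM (slice Φ A t) ≤ specNorm Φ A :=
  le_ciSup (f := fun t => specNormM (slice Φ A t)) (Set.finite_range _).bddAbove t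

lemma re_tinner_le_specNorm_mul_ttnn (hΦ : Φ ∈ unitaryGroup (Fin n3) ℂ) (A B : Tensor n1 n2 n3) :
    (tinner A B).re ≤ specNorm Φ A * ttnn Φ B := by
  rw [tinner_eq_sum_trace hΦ, Complex.re_sum, ttnn, Finset.mul_sum]
  exact Finset.sum_le_sum fun t _ => (re_trace_le_norm_mul_nuclearNormM _ _).trans
    (mul_le_mul_of_nonneg_right (specNormM_slice_le_specNorm A t) (nuclearNormM_nonneg _))

end TensorNorms

section TangentSpace

variable {n1 n2 n3 r : ℕ} {Φ : Matrix (Fin n3) (Fin n3) ℂ} (hΦ : Φ ∈ unitaryGroup (Fin n3) ℂ)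
  {U : Tensor n1 r n3} {V : Tensor n2 r n3}
include hΦ

lemma slice_projTperp (X : Tensor n1 n2 n3) (t : Fin n3) :
    slice Φ (projTperp Φ U V X) t =
      (1 - slice Φ U t * (slice Φ U t)ᴴ) * slice Φ X t * (1 - slice Φ V t * (slice Φ V t)ᴴ) := by
  simp only [projTperp, projT, slice_sub, slice_add, slice_tprod hΦ, slice_tconj hΦ,
    Matrix.sub_mul, Matrix.mul_sub, Matrix.one_mul, Matrix.mul_one]
  abel

omit hΦ in
lemma projT_eq_sub_projTperp (X : Tensor n1 n2 n3) : projT Φ U V X = X - projTperp Φ U V X :=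
  (sub_sub_cancel X _).symm

lemma projTperp_sub (A B : Tensor n1 n2 n3) :
    projTperp Φ U V (A - B) = projTperp Φ U V A - projTperp Φ U V B :=
  ext_slice hΦ fun t => by
    rw [slice_sub, slice_projTperp hΦ, slice_projTperp hΦ, slice_projTperp hΦ, slice_sub,
      Matrix.mul_sub (1 - _), Matrix.sub_mul _ _ (1 - _)]

lemma projTperp_add (A B : Tensor n1 n2 n3) :
    projTperp Φ U V (A + B) = projTperp Φ U V A + projTperp Φ U V B :=
  ext_slice hΦ fun t => by
    rw [slice_add, slice_projTperp hΦ, slice_projTperp hΦ, slice_projTperp hΦ, slice_add,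
      Matrix.mul_add (1 - _), Matrix.add_mul _ _ (1 - _)]

variable (hU : ∀ t, (slice Φ U t)ᴴ * slice Φ U t = 1) (hV : ∀ t, (slice Φ V t)ᴴ * slice Φ V t = 1)
include hU hV

lemma tinner_eq_projT_add_projTperp (A B : Tensor n1 n2 n3) :
    tinner A B = tinner (projT Φ U V A) (projT Φ U V B)
      + tinner (projTperp Φ U V A) (projTperp Φ U V B) := by
  simp only [tinner_eq_sum_trace hΦ, ← Finset.sum_add_distrib, projT_eq_sub_projTperp, slice_sub,
    slice_projTperp hΦ]
  exact Finset.sum_congr rfl fun t _ => trace_conjTranspose_mul_eq_add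
    conjTranspose_one_sub_mul_conjTranspose (one_sub_mul_conjTranspose_idem (hU t))
    conjTranspose_one_sub_mul_conjTranspose (one_sub_mul_conjTranspose_idem (hV t)) _ _

omit hV in
lemma conjTranspose_mul_slice_projTperp (X : Tensor n1 n2 n3) (t : Fin n3) :
    (slice Φ U t)ᴴ * slice Φ (projTperp Φ U V X) t = 0 := by
  rw [slice_projTperp hΦ, ← Matrix.mul_assoc, ← Matrix.mul_assoc,
    conjTranspose_mul_one_sub_mul_conjTranspose (hU t), Matrix.zero_mul, Matrix.zero_mul]

omit hU in
lemma slice_projTperp_mul (X : Tensor n1 n2 n3) (t : Fin n3) :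
    slice Φ (projTperp Φ U V X) t * slice Φ V t = 0 := by
  rw [slice_projTperp hΦ, Matrix.mul_assoc, one_sub_mul_conjTranspose_mul_self (hV t),
    Matrix.mul_zero]

end TangentSpace

section DualCertificate

variable {n1 n2 n3 r : ℕ} {Φ : Matrix (Fin n3) (Fin n3) ℂ} (hΦ : Φ ∈ unitaryGroup (Fin n3) ℂ)
  {U : Tensor n1 r n3} {V : Tensor n2 r n3}

def polarTensor (Φ : Matrix (Fin n3) (Fin n3) ℂ) (A : Tensor n1 n2 n3) : Tensor n1 n2 n3 :=
  unslice Φ fun t => polar (slice Φ A t)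

include hΦ

lemma slice_polarTensor (A : Tensor n1 n2 n3) (t : Fin n3) :
    slice Φ (polarTensor Φ A) t = polar (slice Φ A t) :=
  slice_unslice hΦ _ t

lemma tinner_polarTensor_self (A : Tensor n1 n2 n3) : tinner (polarTensor Φ A) A = ttnn Φ A := by
  rw [tinner_eq_sum_trace hΦ, ttnn, Complex.ofReal_sum]
  exact Finset.sum_congr rfl fun t _ => by
    rw [slice_polarTensor hΦ, trace_conjTranspose_polar_mul]

lemma Tensor.SkinnySVD.slice_eq {Z : Tensor n1 n2 n3} {S : Tensor r r n3}
    (h : SkinnySVD Φ Z r U S V) (t : Fin n3) : slice Φ Z t =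
      slice Φ U t * diagonal (fun i => ((slice Φ S t i i).re : ℂ)) * (slice Φ V t)ᴴ := by
  have hS : slice Φ S t = diagonal fun i => ((slice Φ S t i i).re : ℂ) := by
    ext i j
    rcases eq_or_ne i j with rfl | hij
    · rw [diagonal_apply_eq]
      exact Complex.ext rfl (h.S_diag_real_nonneg t i).1
    · rw [diagonal_apply_ne _ hij, h.S_offdiag t i j hij]
  rw [h.factor, slice_tprod hΦ, slice_tprod hΦ, slice_tconj hΦ, ← hS]

lemma ttnn_le_re_tinner_add {Z : Tensor n1 n2 n3} {S : Tensor r r n3}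
    (hSVD : SkinnySVD Φ Z r U S V) {Q : Tensor n1 n2 n3}
    (hQ : ∀ t, (slice Φ U t)ᴴ * slice Φ Q t = 0) :
    ttnn Φ Z ≤ (tinner (tprod Φ U (tconj Φ V) + Q) Z).re := by
  rw [tinner_eq_sum_trace hΦ, Complex.re_sum, ttnn]
  refine Finset.sum_le_sum fun t _ => ?_
  rw [slice_add, slice_tprod hΦ, slice_tconj hΦ, hSVD.slice_eq hΦ t,
    trace_conjTranspose_add_mul (hSVD.U_orth t) (hSVD.V_orth t) (hQ t), trace_diagonal,
    ← Complex.ofReal_sum, Complex.ofReal_re]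
  exact nuclearNormM_mul_diagonal_mul_le (hSVD.U_orth t) (hSVD.V_orth t)
    fun i => (hSVD.S_diag_real_nonneg t i).2

variable (hU : ∀ t, (slice Φ U t)ᴴ * slice Φ U t = 1) (hV : ∀ t, (slice Φ V t)ᴴ * slice Φ V t = 1)
include hU hV

omit hV in
lemma conjTranspose_mul_slice_polarTensor_projTperp (W : Tensor n1 n2 n3) (t : Fin n3) :
    (slice Φ U t)ᴴ * slice Φ (polarTensor Φ (projTperp Φ U V W)) t = 0 := by
  rw [slice_polarTensor hΦ]
  exact mul_polar_eq_zero _ (conjTranspose_mul_slice_projTperp hΦ hU W t)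

omit hU in
lemma slice_polarTensor_projTperp_mul (W : Tensor n1 n2 n3) (t : Fin n3) :
    slice Φ (polarTensor Φ (projTperp Φ U V W)) t * slice Φ V t = 0 := by
  rw [slice_polarTensor hΦ]
  exact polar_mul_eq_zero _ (slice_projTperp_mul hΦ hV W t)

omit hV in
lemma projTperp_tprod_tconj : projTperp Φ U V (tprod Φ U (tconj Φ V)) = 0 :=
  ext_slice hΦ fun t => by
    rw [slice_projTperp hΦ, slice_tprod hΦ, slice_tconj hΦ, slice_zero, ← Matrix.mul_assoc,
      one_sub_mul_conjTranspose_mul_self (hU t), Matrix.zero_mul, Matrix.zero_mul]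

lemma projTperp_polarTensor_projTperp (W : Tensor n1 n2 n3) :
    projTperp Φ U V (polarTensor Φ (projTperp Φ U V W)) = polarTensor Φ (projTperp Φ U V W) :=
  ext_slice hΦ fun t => by
    rw [slice_projTperp hΦ, one_sub_mul_conjTranspose_mul_of_conjTranspose_mul_eq_zero
      (conjTranspose_mul_slice_polarTensor_projTperp hΦ hU W t),
      mul_one_sub_mul_conjTranspose_of_mul_eq_zero (slice_polarTensor_projTperp_mul hΦ hV W t)]

lemma specNorm_add_polarTensor_le_one (W : Tensor n1 n2 n3) :
    specNorm Φ (tprod Φ U (tconj Φ V) + polarTensor Φ (projTperp Φ U V W)) ≤ 1 := by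
  refine Real.iSup_le (fun t => ?_) zero_le_one
  rw [slice_add, slice_tprod hΦ, slice_tconj hΦ, slice_polarTensor hΦ]
  exact norm_add_polar_le_one _ (hU t) (hV t) (conjTranspose_mul_slice_projTperp hΦ hU W t)
    (slice_projTperp_mul hΦ hV W t)

lemma re_tinner_add_polarTensor_pos {Ω : Set (Fin n1 × Fin n2 × Fin n3)} {Y W : Tensor n1 n2 n3}
    {c : ℝ} (hYΩ : projOmega Ω Y = Y) (hWΩ : projOmega Ω W = 0)
    (hYT : frob (projT Φ U V Y - tprod Φ U (tconj Φ V)) ≤ c)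
    (hYperp : specNorm Φ (projTperp Φ U V Y) ≤ 1 / 2)
    (hsep : c * frob (projT Φ U V W) < 1 / 2 * ttnn Φ (projTperp Φ U V W)) :
    0 < (tinner (tprod Φ U (tconj Φ V) + polarTensor Φ (projTperp Φ U V W)) W).re := by
  set D := tprod Φ U (tconj Φ V)
  set Q := polarTensor Φ (projTperp Φ U V W)
  have hperp : projTperp Φ U V (D + Q - Y) = Q - projTperp Φ U V Y := by
    rw [projTperp_sub hΦ, projTperp_add hΦ, projTperp_tprod_tconj hΦ hU,
      projTperp_polarTensor_projTperp hΦ hU hV, zero_add]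
  have hT : projT Φ U V (D + Q - Y) = D - projT Φ U V Y := by
    rw [projT_eq_sub_projTperp, hperp, projT_eq_sub_projTperp]
    abel
  have hsplit : tinner (D + Q) W = tinner (D - projT Φ U V Y) (projT Φ U V W)
      + tinner (Q - projTperp Φ U V Y) (projTperp Φ U V W) := by
    rw [← sub_zero (tinner (D + Q) W), ← tinner_eq_zero_of_projOmega hYΩ hWΩ, ← tinner_sub_left,
      tinner_eq_projT_add_projTperp hΦ hU hV, hT, hperp]
  have hTbound : -(c * frob (projT Φ U V W)) ≤ (tinner (D - projT Φ U V Y) (projT Φ U V W)).re := by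
    refine le_trans ?_ (neg_frob_mul_frob_le_re_tinner _ _)
    rw [frob_sub_comm]
    exact neg_le_neg (mul_le_mul_of_nonneg_right hYT (frob_nonneg _))
  have hperpBound : 1 / 2 * ttnn Φ (projTperp Φ U V W) ≤
      (tinner (Q - projTperp Φ U V Y) (projTperp Φ U V W)).re := by
    rw [tinner_sub_left, Complex.sub_re, tinner_polarTensor_self hΦ, Complex.ofReal_re]
    nlinarith [re_tinner_le_specNorm_mul_ttnn hΦ (projTperp Φ U V Y) (projTperp Φ U V W),
      ttnn_nonneg (Φ := Φ) (projTperp Φ U V W)]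
  rw [hsplit, Complex.add_re]
  linarith

end DualCertificate

/-- uniqueness of the TTNN minimizer from a dual certificate. -/
theorem statement10 {n1 n2 n3 r : ℕ} (Φ : Matrix (Fin n3) (Fin n3) ℂ)
    (hΦ : Φ ∈ Matrix.unitaryGroup (Fin n3) ℂ)
    (Z : Tensor n1 n2 n3) (U : Tensor n1 r n3) (S : Tensor r r n3) (V : Tensor n2 r n3)
    (hSVD : SkinnySVD Φ Z r U S V)
    (Ω : Set (Fin n1 × Fin n2 × Fin n3))
    (hY : ∃ Y : Tensor n1 n2 n3, projOmega Ω Y = Y ∧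
      frob (projT Φ U V Y - tprod Φ U (tconj Φ V)) ≤ 1 / (4 * (max n1 n2 : ℝ) * n3) ∧
      specNorm Φ (projTperp Φ U V Y) ≤ 1 / 2)
    (hsep : ∀ W : Tensor n1 n2 n3, W ≠ 0 → projOmega Ω W = 0 →
      (1 / (4 * (max n1 n2 : ℝ) * n3)) * frob (projT Φ U V W)
        < (1 / 2) * ttnn Φ (projTperp Φ U V W)) :
    ∀ X : Tensor n1 n2 n3, projOmega Ω X = projOmega Ω Z → X ≠ Z →
      ttnn Φ Z < ttnn Φ X := by
  intro X hX hXZ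
  obtain ⟨Y, hYΩ, hYT, hYperp⟩ := hY
  have hWΩ : projOmega Ω (X - Z) = 0 := by rw [projOmega_sub, hX, sub_self]
  set G := tprod Φ U (tconj Φ V) + polarTensor Φ (projTperp Φ U V (X - Z))
  have hGW : 0 < (tinner G (X - Z)).re :=
    re_tinner_add_polarTensor_pos hΦ hSVD.U_orth hSVD.V_orth hYΩ hWΩ hYT hYperp
      (hsep _ (sub_ne_zero.mpr hXZ) hWΩ)
  have hGZ : ttnn Φ Z ≤ (tinner G Z).re :=
    ttnn_le_re_tinner_add hΦ hSVD (conjTranspose_mul_slice_polarTensor_projTperp hΦ hSVD.U_orth _)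
  have hGX : (tinner G X).re ≤ ttnn Φ X :=
    (re_tinner_le_specNorm_mul_ttnn hΦ G X).trans <| mul_le_of_le_one_left (ttnn_nonneg X)
      (specNorm_add_polarTensor_le_one hΦ hSVD.U_orth hSVD.V_orth _)
  rw [tinner_sub_right, Complex.sub_re] at hGW
  linarith
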